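/- In the intuitionistic value sequent calculus, the reductions →λ̄ (beta-mu) and →μ̃ (mu-tilde) strongly commute: if c1 ←λ̄ c →μ̃ c2 then c1 ≠ c2 and there is c3 with c1 →μ̃ c3 and c2 →λ̄ c3; moreover each of →λ̄ and →μ̃ is strongly normalizing and strongly confluent, so →vseq = →λ̄ ∪ →μ̃ is strongly confluent. -/
import Mathlib


mutual
/-- Commands of the value sequent calculus: `c ::= ⟨v | e⟩`. -/
inductive Cmd : Type
  | mk : Val → Env → Cmd
/-- Values: `v ::= x | λx.c` (de Bruijn notation). -/
inductive Val : Type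
  | var : Nat → Val
  | lam : Cmd → Val
/-- Environments: `e ::= ε | μ̃x.c | v·e`. -/
inductive Env : Type
  | nil : Env
  | mut : Cmd → Env
  | cons : Val → Env → Env
end

mutual
/-- Shift the free de Bruijn indices `≥ k` of a command. -/
def shiftC (k : Nat) : Cmd → Cmd
  | .mk v e => .mk (shiftV k v) (shiftE k e)
/-- Shift the free de Bruijn indices `≥ k` of a value. -/
def shiftV (k : Nat) : Val → Val
  | .var n => if k ≤ n then .var (n+1) else .var n
  | .lam c => .lam (shiftC (k+1) c)
/-- Shift the free de Bruijn indices `≥ k` of an environment. -/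
def shiftE (k : Nat) : Env → Env
  | .nil => .nil
  | .mut c => .mut (shiftC (k+1) c)
  | .cons v e => .cons (shiftV k v) (shiftE k e)
end

mutual
/-- Capture-avoiding substitution `c{k := w}`. -/
def substC : Cmd → Nat → Val → Cmd
  | .mk v e, k, w => .mk (substV v k w) (substE e k w)
/-- Capture-avoiding substitution on values. -/
def substV : Val → Nat → Val → Val
  | .var n, k, w => if n = k then w else if k < n then .var (n-1) else .var n
  | .lam c, k, w => .lam (substC c (k+1) (shiftV 0 w))
/-- Capture-avoiding substitution on environments. -/
def substE : Env → Nat → Val → Env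
  | .nil, _, _ => .nil
  | .mut c, k, w => .mut (substC c (k+1) (shiftV 0 w))
  | .cons v e, k, w => .cons (substV v k w) (substE e k w)
end

mutual
/-- Appending `c@e`: substitute `e` for the unique toplevel occurrence
of `ε` in `c`. -/
def appC : Cmd → Env → Cmd
  | .mk v e', e => .mk v (appE e' e)
/-- Appending `e'@e` on environments. -/
def appE : Env → Env → Env
  | .nil, e => e
  | .mut c, e => .mut (appC c (shiftE 0 e))
  | .cons v e', e => .cons v (appE e' e)
end

mutual
/-- λ̄-steps on commands: root rule `⟨λx.c | v·e⟩ ↦λ̄ ⟨v | (μ̃x.c)@e⟩`,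
closed under the command evaluation contexts `C ::= ⟨·⟩ | D⟨μ̃x.C⟩`
with `D ::= ⟨v|⟨·⟩⟩ | D⟨v·⟨·⟩⟩`. -/
inductive StepLC : Cmd → Cmd → Prop
  | root : StepLC (.mk (.lam c) (.cons v e)) (.mk v (appE (.mut c) e))
  | env : StepLE e e' → StepLC (.mk v e) (.mk v e')
/-- λ̄-steps on environments. -/
inductive StepLE : Env → Env → Prop
  | mut : StepLC c c' → StepLE (.mut c) (.mut c')
  | cons : StepLE e e' → StepLE (.cons v e) (.cons v e')
end

mutual
/-- μ̃-steps on commands: root rule `⟨v | μ̃x.c⟩ ↦μ̃ c{x:=v}`, closed under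
command evaluation contexts. -/
inductive StepMuC : Cmd → Cmd → Prop
  | root : StepMuC (.mk v (.mut c)) (substC c 0 v)
  | env : StepMuE e e' → StepMuC (.mk v e) (.mk v e')
/-- μ̃-steps on environments. -/
inductive StepMuE : Env → Env → Prop
  | mut : StepMuC c c' → StepMuE (.mut c) (.mut c')
  | cons : StepMuE e e' → StepMuE (.cons v e) (.cons v e')
end

/-- vseq-reduction `→vseq = →λ̄ ∪ →μ̃`. -/
def StepVseq (c c' : Cmd) : Prop := StepLC c c' ∨ StepMuC c c'


/-! ### Auxiliary de Bruijn lemmas -/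

mutual
theorem ssC : ∀ (c : Cmd) (j k : Nat), j ≤ k →
    shiftC (k+1) (shiftC j c) = shiftC j (shiftC k c)
  | .mk v e, j, k, h => by simp only [shiftC, ssV v j k h, ssE e j k h]
theorem ssV : ∀ (v : Val) (j k : Nat), j ≤ k →
    shiftV (k+1) (shiftV j v) = shiftV j (shiftV k v)
  | .var n, j, k, h => by
      simp only [shiftV]; split_ifs <;> simp only [shiftV] <;> split_ifs <;>
        first | rfl | omega | (congr 1; omega)
  | .lam c, j, k, h => by
      simp only [shiftV, ssC c (j+1) (k+1) (by omega)]
theorem ssE : ∀ (e : Env) (j k : Nat), j ≤ k →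
    shiftE (k+1) (shiftE j e) = shiftE j (shiftE k e)
  | .nil, _, _, _ => rfl
  | .mut c, j, k, h => by simp only [shiftE, ssC c (j+1) (k+1) (by omega)]
  | .cons v e, j, k, h => by simp only [shiftE, ssV v j k h, ssE e j k h]
end


-- shift below, subst above: `↑ⱼ (t{k:=w}) = (↑ⱼ t){k+1 := ↑ⱼ w}` for `j ≤ k`.
mutual
theorem shsubC : ∀ (c : Cmd) (j k : Nat) (w : Val), j ≤ k →
    shiftC j (substC c k w) = substC (shiftC j c) (k+1) (shiftV j w)
  | .mk v e, j, k, w, h => by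
      simp only [shiftC, substC, shsubV v j k w h, shsubE e j k w h]
theorem shsubV : ∀ (v : Val) (j k : Nat) (w : Val), j ≤ k →
    shiftV j (substV v k w) = substV (shiftV j v) (k+1) (shiftV j w)
  | .var n, j, k, w, h => by
      simp only [substV, shiftV]; split_ifs <;>
        simp only [substV, shiftV] <;> split_ifs <;>
        first | rfl | omega | (congr 1; omega)
  | .lam c, j, k, w, h => by
      simp only [shiftV, substV, shsubC c (j+1) (k+1) (shiftV 0 w) (by omega),
        ssV w 0 j (by omega)]
theorem shsubE : ∀ (e : Env) (j k : Nat) (w : Val), j ≤ k →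
    shiftE j (substE e k w) = substE (shiftE j e) (k+1) (shiftV j w)
  | .nil, _, _, _, _ => rfl
  | .mut c, j, k, w, h => by
      simp only [shiftE, substE, shsubC c (j+1) (k+1) (shiftV 0 w) (by omega),
        ssV w 0 j (by omega)]
  | .cons v e, j, k, w, h => by
      simp only [shiftE, substE, shsubV v j k w h, shsubE e j k w h]
end

-- shift above, subst below: `↑ₖ (t{j:=w}) = (↑ₖ₊₁ t){j := ↑ₖ w}` for `j ≤ k`.
mutual
theorem subshC : ∀ (c : Cmd) (j k : Nat) (w : Val), j ≤ k →
    shiftC k (substC c j w) = substC (shiftC (k+1) c) j (shiftV k w)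
  | .mk v e, j, k, w, h => by
      simp only [shiftC, substC, subshV v j k w h, subshE e j k w h]
theorem subshV : ∀ (v : Val) (j k : Nat) (w : Val), j ≤ k →
    shiftV k (substV v j w) = substV (shiftV (k+1) v) j (shiftV k w)
  | .var n, j, k, w, h => by
      simp only [substV, shiftV]; split_ifs <;>
        simp only [substV, shiftV] <;> split_ifs <;>
        first | rfl | omega | (congr 1; omega)
  | .lam c, j, k, w, h => by
      simp only [shiftV, substV, subshC c (j+1) (k+1) (shiftV 0 w) (by omega),
        ssV w 0 k (by omega)]
theorem subshE : ∀ (e : Env) (j k : Nat) (w : Val), j ≤ k →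
    shiftE k (substE e j w) = substE (shiftE (k+1) e) j (shiftV k w)
  | .nil, _, _, _, _ => rfl
  | .mut c, j, k, w, h => by
      simp only [shiftE, substE, subshC c (j+1) (k+1) (shiftV 0 w) (by omega),
        ssV w 0 k (by omega)]
  | .cons v e, j, k, w, h => by
      simp only [shiftE, substE, subshV v j k w h, subshE e j k w h]
end

-- substitution cancels shift: `(↑ⱼ t){j := u} = t`.
mutual
theorem cancC : ∀ (c : Cmd) (j : Nat) (u : Val), substC (shiftC j c) j u = c
  | .mk v e, j, u => by simp only [shiftC, substC, cancV v j u, cancE e j u]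
theorem cancV : ∀ (v : Val) (j : Nat) (u : Val), substV (shiftV j v) j u = v
  | .var n, j, u => by
      simp only [shiftV]; split_ifs <;> simp only [substV] <;> split_ifs <;>
        first | rfl | omega | (congr 1; omega)
  | .lam c, j, u => by simp only [shiftV, substV, cancC c (j+1) (shiftV 0 u)]
theorem cancE : ∀ (e : Env) (j : Nat) (u : Val), substE (shiftE j e) j u = e
  | .nil, _, _ => rfl
  | .mut c, j, u => by simp only [shiftE, substE, cancC c (j+1) (shiftV 0 u)]
  | .cons v e, j, u => by simp only [shiftE, substE, cancV v j u, cancE e j u]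
end

-- substitution lemma: `t{j:=u}{k:=w} = t{k+1:=↑ⱼw}{j:=u{k:=w}}` for `j ≤ k`.
mutual
theorem subsubC : ∀ (c : Cmd) (j k : Nat) (u w : Val), j ≤ k →
    substC (substC c j u) k w = substC (substC c (k+1) (shiftV j w)) j (substV u k w)
  | .mk v e, j, k, u, w, h => by
      simp only [substC, subsubV v j k u w h, subsubE e j k u w h]
theorem subsubV : ∀ (v : Val) (j k : Nat) (u w : Val), j ≤ k →
    substV (substV v j u) k w = substV (substV v (k+1) (shiftV j w)) j (substV u k w)
  | .var n, j, k, u, w, h => by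
      simp only [substV]; split_ifs <;> (try simp only [substV]) <;> (try split_ifs) <;>
        first | rfl | omega | (exfalso; omega) | (congr 1; omega) | (rw [cancV])
  | .lam c, j, k, u, w, h => by
      simp only [substV, subsubC c (j+1) (k+1) (shiftV 0 u) (shiftV 0 w) (by omega),
        ssV w 0 j (by omega), shsubV u 0 k w (by omega)]
theorem subsubE : ∀ (e : Env) (j k : Nat) (u w : Val), j ≤ k →
    substE (substE e j u) k w = substE (substE e (k+1) (shiftV j w)) j (substV u k w)
  | .nil, _, _, _, _, _ => rfl
  | .mut c, j, k, u, w, h => by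
      simp only [substE, subsubC c (j+1) (k+1) (shiftV 0 u) (shiftV 0 w) (by omega),
        ssV w 0 j (by omega), shsubV u 0 k w (by omega)]
  | .cons v e, j, k, u, w, h => by
      simp only [substE, subsubV v j k u w h, subsubE e j k u w h]
end


-- shift commutes with append.
mutual
theorem shappC : ∀ (c : Cmd) (k : Nat) (E : Env),
    shiftC k (appC c E) = appC (shiftC k c) (shiftE k E)
  | .mk v e, k, E => by simp only [appC, shiftC, shappE e k E]
theorem shappE : ∀ (e : Env) (k : Nat) (E : Env),
    shiftE k (appE e E) = appE (shiftE k e) (shiftE k E)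
  | .nil, _, _ => rfl
  | .mut c, k, E => by
      simp only [appE, shiftE, shappC c (k+1) (shiftE 0 E), ssE E 0 k (by omega)]
  | .cons v e, k, E => by simp only [appE, shiftE, shappE e k E]
end

-- subst commutes with append.
mutual
theorem suappC : ∀ (c : Cmd) (k : Nat) (w : Val) (E : Env),
    substC (appC c E) k w = appC (substC c k w) (substE E k w)
  | .mk v e, k, w, E => by simp only [appC, substC, suappE e k w E]
theorem suappE : ∀ (e : Env) (k : Nat) (w : Val) (E : Env),
    substE (appE e E) k w = appE (substE e k w) (substE E k w)
  | .nil, _, _, _ => rfl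
  | .mut c, k, w, E => by
      simp only [appE, substE, suappC c (k+1) (shiftV 0 w) (shiftE 0 E),
        shsubE E 0 k w (by omega)]
  | .cons v e, k, w, E => by simp only [appE, substE, suappE e k w E]
end

/-! ### Measures -/

mutual
/-- number of `mut` nodes on the evaluation spine. -/
def muC : Cmd → Nat
  | .mk _ e => muE e
def muE : Env → Nat
  | .nil => 0
  | .mut c => muC c + 1
  | .cons _ e => muE e
end

mutual
/-- weighted count of `lam` nodes. -/
def lamC : Cmd → Nat
  | .mk v e => lamV v + lamE e
def lamV : Val → Nat
  | .var _ => 0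
  | .lam c => lamC c + 1
def lamE : Env → Nat
  | .nil => 0
  | .mut c => lamC c
  | .cons v e => lamV v + lamE e
end

mutual
theorem mu_shiftC : ∀ (k : Nat) (c : Cmd), muC (shiftC k c) = muC c
  | k, .mk v e => by simp only [shiftC, muC, mu_shiftE k e]
theorem mu_shiftE : ∀ (k : Nat) (e : Env), muE (shiftE k e) = muE e
  | _, .nil => rfl
  | k, .mut c => by simp only [shiftE, muE, mu_shiftC (k+1) c]
  | k, .cons v e => by simp only [shiftE, muE, mu_shiftE k e]
end

mutual
theorem mu_substC : ∀ (c : Cmd) (k : Nat) (w : Val), muC (substC c k w) = muC c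
  | .mk v e, k, w => by simp only [substC, muC, mu_substE e k w]
theorem mu_substE : ∀ (e : Env) (k : Nat) (w : Val), muE (substE e k w) = muE e
  | .nil, _, _ => rfl
  | .mut c, k, w => by simp only [substE, muE, mu_substC c (k+1) (shiftV 0 w)]
  | .cons v e, k, w => by simp only [substE, muE, mu_substE e k w]
end

mutual
theorem mu_appC : ∀ (c : Cmd) (E : Env), muC (appC c E) = muC c + muE E
  | .mk v e, E => by simp only [appC, muC, mu_appE e E]
theorem mu_appE : ∀ (e : Env) (E : Env), muE (appE e E) = muE e + muE E
  | .nil, E => by simp only [appE, muE]; omega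
  | .mut c, E => by
      simp only [appE, muE, mu_appC c (shiftE 0 E), mu_shiftE 0 E]; omega
  | .cons v e, E => by simp only [appE, muE, mu_appE e E]
end

mutual
theorem lam_shiftC : ∀ (k : Nat) (c : Cmd), lamC (shiftC k c) = lamC c
  | k, .mk v e => by simp only [shiftC, lamC, lam_shiftV k v, lam_shiftE k e]
theorem lam_shiftV : ∀ (k : Nat) (v : Val), lamV (shiftV k v) = lamV v
  | k, .var n => by simp only [shiftV]; split_ifs <;> rfl
  | k, .lam c => by simp only [shiftV, lamV, lam_shiftC (k+1) c]
theorem lam_shiftE : ∀ (k : Nat) (e : Env), lamE (shiftE k e) = lamE e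
  | _, .nil => rfl
  | k, .mut c => by simp only [shiftE, lamE, lam_shiftC (k+1) c]
  | k, .cons v e => by simp only [shiftE, lamE, lam_shiftV k v, lam_shiftE k e]
end

mutual
theorem lam_appC : ∀ (c : Cmd) (E : Env), lamC (appC c E) = lamC c + lamE E
  | .mk v e, E => by simp only [appC, lamC, lam_appE e E]; omega
theorem lam_appE : ∀ (e : Env) (E : Env), lamE (appE e E) = lamE e + lamE E
  | .nil, E => by simp only [appE, lamE]; omega
  | .mut c, E => by
      simp only [appE, lamE, lam_appC c (shiftE 0 E), lam_shiftE 0 E]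
  | .cons v e, E => by simp only [appE, lamE, lam_appE e E]; omega
end


/-! ### Measures vs steps -/

mutual
theorem muC_stepMu : ∀ {c c' : Cmd}, StepMuC c c' → muC c' < muC c
  | _, _, .root => by simp only [muC, muE, mu_substC]; omega
  | _, _, .env h => by simp only [muC]; exact muE_stepMu h
theorem muE_stepMu : ∀ {e e' : Env}, StepMuE e e' → muE e' < muE e
  | _, _, .mut h => by simp only [muE]; have := muC_stepMu h; omega
  | _, _, .cons h => by simp only [muE]; exact muE_stepMu h
end

mutual
theorem muC_stepL : ∀ {c c' : Cmd}, StepLC c c' → muC c < muC c'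
  | _, _, .root => by simp only [muC, muE, appE, mu_appC, mu_shiftE]; omega
  | _, _, .env h => by simp only [muC]; exact muE_stepL h
theorem muE_stepL : ∀ {e e' : Env}, StepLE e e' → muE e < muE e'
  | _, _, .mut h => by simp only [muE]; have := muC_stepL h; omega
  | _, _, .cons h => by simp only [muE]; exact muE_stepL h
end

mutual
theorem lamC_stepL : ∀ {c c' : Cmd}, StepLC c c' → lamC c' < lamC c
  | _, _, .root => by simp only [lamC, lamV, lamE, appE, lam_appC, lam_shiftE]; omega
  | _, _, .env h => by simp only [lamC]; have := lamE_stepL h; omega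
theorem lamE_stepL : ∀ {e e' : Env}, StepLE e e' → lamE e' < lamE e
  | _, _, .mut h => by simp only [lamE]; exact lamC_stepL h
  | _, _, .cons h => by simp only [lamE]; have := lamE_stepL h; omega
end

/-! ### Steps are preserved by shift, subst, append -/

mutual
theorem stepL_shiftC : ∀ {c c' : Cmd}, StepLC c c' → ∀ k, StepLC (shiftC k c) (shiftC k c')
  | _, _, @StepLC.root c v e, k => by
      have h := @StepLC.root (shiftC (k+1) c) (shiftV k v) (shiftE k e)
      simp only [appE] at h
      simp only [shiftC, shiftV, shiftE, appE]
      rw [shappC c (k+1) (shiftE 0 e), ssE e 0 k (Nat.zero_le k)]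
      exact h
  | _, _, .env h, k => by
      simp only [shiftC]; exact .env (stepL_shiftE h k)
theorem stepL_shiftE : ∀ {e e' : Env}, StepLE e e' → ∀ k, StepLE (shiftE k e) (shiftE k e')
  | _, _, .mut h, k => by simp only [shiftE]; exact .mut (stepL_shiftC h (k+1))
  | _, _, .cons h, k => by simp only [shiftE]; exact .cons (stepL_shiftE h k)
end

mutual
theorem stepMu_shiftC : ∀ {c c' : Cmd}, StepMuC c c' → ∀ k, StepMuC (shiftC k c) (shiftC k c')
  | _, _, .root, k => by
      simp only [shiftC, shiftE]
      rw [subshC _ 0 k _ (by omega)]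
      exact .root
  | _, _, .env h, k => by
      simp only [shiftC]; exact .env (stepMu_shiftE h k)
theorem stepMu_shiftE : ∀ {e e' : Env}, StepMuE e e' → ∀ k, StepMuE (shiftE k e) (shiftE k e')
  | _, _, .mut h, k => by simp only [shiftE]; exact .mut (stepMu_shiftC h (k+1))
  | _, _, .cons h, k => by simp only [shiftE]; exact .cons (stepMu_shiftE h k)
end

mutual
theorem stepL_substC : ∀ {c c' : Cmd}, StepLC c c' → ∀ (k : Nat) (w : Val),
    StepLC (substC c k w) (substC c' k w)
  | _, _, @StepLC.root c v e, k, w => by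
      have h := @StepLC.root (substC c (k+1) (shiftV 0 w)) (substV v k w) (substE e k w)
      simp only [appE] at h
      simp only [substC, substV, substE, appE]
      rw [suappC c (k+1) (shiftV 0 w) (shiftE 0 e), ← shsubE e 0 k w (Nat.zero_le k)]
      exact h
  | _, _, .env h, k, w => by
      simp only [substC]; exact .env (stepL_substE h k w)
theorem stepL_substE : ∀ {e e' : Env}, StepLE e e' → ∀ (k : Nat) (w : Val),
    StepLE (substE e k w) (substE e' k w)
  | _, _, .mut h, k, w => by simp only [substE]; exact .mut (stepL_substC h (k+1) _)
  | _, _, .cons h, k, w => by simp only [substE]; exact .cons (stepL_substE h k w)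
end

mutual
theorem stepMu_substC : ∀ {c c' : Cmd}, StepMuC c c' → ∀ (k : Nat) (w : Val),
    StepMuC (substC c k w) (substC c' k w)
  | _, _, .root, k, w => by
      simp only [substC, substE]
      rw [subsubC _ 0 k _ w (by omega)]
      exact .root
  | _, _, .env h, k, w => by
      simp only [substC]; exact .env (stepMu_substE h k w)
theorem stepMu_substE : ∀ {e e' : Env}, StepMuE e e' → ∀ (k : Nat) (w : Val),
    StepMuE (substE e k w) (substE e' k w)
  | _, _, .mut h, k, w => by simp only [substE]; exact .mut (stepMu_substC h (k+1) _)
  | _, _, .cons h, k, w => by simp only [substE]; exact .cons (stepMu_substE h k w)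
end

mutual
theorem stepL_appC : ∀ (c : Cmd) {E E' : Env}, StepLE E E' → StepLC (appC c E) (appC c E')
  | .mk v e, _, _, h => by simp only [appC]; exact .env (stepL_appE e h)
theorem stepL_appE : ∀ (e : Env) {E E' : Env}, StepLE E E' → StepLE (appE e E) (appE e E')
  | .nil, _, _, h => h
  | .mut c, _, _, h => by simp only [appE]; exact .mut (stepL_appC c (stepL_shiftE h 0))
  | .cons v e, _, _, h => by simp only [appE]; exact .cons (stepL_appE e h)
end

mutual
theorem stepMu_appC : ∀ (c : Cmd) {E E' : Env}, StepMuE E E' → StepMuC (appC c E) (appC c E')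
  | .mk v e, _, _, h => by simp only [appC]; exact .env (stepMu_appE e h)
theorem stepMu_appE : ∀ (e : Env) {E E' : Env}, StepMuE E E' → StepMuE (appE e E) (appE e E')
  | .nil, _, _, h => h
  | .mut c, _, _, h => by simp only [appE]; exact .mut (stepMu_appC c (stepMu_shiftE h 0))
  | .cons v e, _, _, h => by simp only [appE]; exact .cons (stepMu_appE e h)
end


/-! ### Strong confluence of each relation and strong commutation -/

mutual
theorem diamondLC : ∀ {c c1 c2 : Cmd}, StepLC c c1 → StepLC c c2 →
    c1 = c2 ∨ ∃ c3, StepLC c1 c3 ∧ StepLC c2 c3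
  | _, _, _, .root, .root => Or.inl rfl
  | _, _, _, .root, .env (.cons h2) =>
      Or.inr ⟨_, .env (stepL_appE _ h2), .root⟩
  | _, _, _, .env (.cons h1), .root =>
      Or.inr ⟨_, .root, .env (stepL_appE _ h1)⟩
  | _, _, _, .env h1, .env h2 => by
      rcases diamondLE h1 h2 with rfl | ⟨e3, a, b⟩
      · exact Or.inl rfl
      · exact Or.inr ⟨_, .env a, .env b⟩
theorem diamondLE : ∀ {e e1 e2 : Env}, StepLE e e1 → StepLE e e2 →
    e1 = e2 ∨ ∃ e3, StepLE e1 e3 ∧ StepLE e2 e3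
  | _, _, _, .mut h1, .mut h2 => by
      rcases diamondLC h1 h2 with rfl | ⟨c3, a, b⟩
      · exact Or.inl rfl
      · exact Or.inr ⟨_, .mut a, .mut b⟩
  | _, _, _, .cons h1, .cons h2 => by
      rcases diamondLE h1 h2 with rfl | ⟨e3, a, b⟩
      · exact Or.inl rfl
      · exact Or.inr ⟨_, .cons a, .cons b⟩
end

mutual
theorem diamondMuC : ∀ {c c1 c2 : Cmd}, StepMuC c c1 → StepMuC c c2 →
    c1 = c2 ∨ ∃ c3, StepMuC c1 c3 ∧ StepMuC c2 c3
  | _, _, _, .root, .root => Or.inl rfl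
  | _, _, _, .root, .env (.mut h2) =>
      Or.inr ⟨_, stepMu_substC h2 0 _, .root⟩
  | _, _, _, .env (.mut h1), .root =>
      Or.inr ⟨_, .root, stepMu_substC h1 0 _⟩
  | _, _, _, .env h1, .env h2 => by
      rcases diamondMuE h1 h2 with rfl | ⟨e3, a, b⟩
      · exact Or.inl rfl
      · exact Or.inr ⟨_, .env a, .env b⟩
theorem diamondMuE : ∀ {e e1 e2 : Env}, StepMuE e e1 → StepMuE e e2 →
    e1 = e2 ∨ ∃ e3, StepMuE e1 e3 ∧ StepMuE e2 e3
  | _, _, _, .mut h1, .mut h2 => by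
      rcases diamondMuC h1 h2 with rfl | ⟨c3, a, b⟩
      · exact Or.inl rfl
      · exact Or.inr ⟨_, .mut a, .mut b⟩
  | _, _, _, .cons h1, .cons h2 => by
      rcases diamondMuE h1 h2 with rfl | ⟨e3, a, b⟩
      · exact Or.inl rfl
      · exact Or.inr ⟨_, .cons a, .cons b⟩
end

mutual
theorem commC : ∀ {c c1 c2 : Cmd}, StepLC c c1 → StepMuC c c2 →
    ∃ c3, StepMuC c1 c3 ∧ StepLC c2 c3
  | _, _, _, .root, .env (.cons h2) =>
      ⟨_, .env (stepMu_appE _ h2), .root⟩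
  | _, _, _, .env (.mut h1), .root =>
      ⟨_, .root, stepL_substC h1 0 _⟩
  | _, _, _, .env h1, .env h2 => by
      obtain ⟨e3, a, b⟩ := commE h1 h2
      exact ⟨_, .env a, .env b⟩
theorem commE : ∀ {e e1 e2 : Env}, StepLE e e1 → StepMuE e e2 →
    ∃ e3, StepMuE e1 e3 ∧ StepLE e2 e3
  | _, _, _, .mut h1, .mut h2 => by
      obtain ⟨c3, a, b⟩ := commC h1 h2
      exact ⟨_, .mut a, .mut b⟩
  | _, _, _, .cons h1, .cons h2 => by
      obtain ⟨e3, a, b⟩ := commE h1 h2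
      exact ⟨_, .cons a, .cons b⟩
end

theorem accL (c : Cmd) : Acc (fun a b => StepLC b a) c := by
  have wf : WellFounded (InvImage (· < ·) lamC) := InvImage.wf lamC Nat.lt_wfRel.wf
  exact Subrelation.accessible (r := InvImage (· < ·) lamC)
    (fun h => lamC_stepL h) (wf.apply c)

theorem accMu (c : Cmd) : Acc (fun a b => StepMuC b a) c := by
  have wf : WellFounded (InvImage (· < ·) muC) := InvImage.wf muC Nat.lt_wfRel.wf
  exact Subrelation.accessible (r := InvImage (· < ·) muC)
    (fun h => muC_stepMu h) (wf.apply c)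

/-- `→λ̄` and `→μ̃` strongly commute; each is strongly
normalizing and strongly confluent; hence `→vseq = →λ̄ ∪ →μ̃` is strongly
confluent. -/
theorem vseq_rewriting_properties :
    (∀ c c₁ c₂ : Cmd, StepLC c c₁ → StepMuC c c₂ →
      c₁ ≠ c₂ ∧ ∃ c₃, StepMuC c₁ c₃ ∧ StepLC c₂ c₃) ∧
    (∀ c : Cmd, Acc (fun a b => StepLC b a) c) ∧
    (∀ c : Cmd, Acc (fun a b => StepMuC b a) c) ∧
    (∀ c c₁ c₂ : Cmd, StepLC c c₁ → StepLC c c₂ → c₁ ≠ c₂ →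
      ∃ c₃, StepLC c₁ c₃ ∧ StepLC c₂ c₃) ∧
    (∀ c c₁ c₂ : Cmd, StepMuC c c₁ → StepMuC c c₂ → c₁ ≠ c₂ →
      ∃ c₃, StepMuC c₁ c₃ ∧ StepMuC c₂ c₃) ∧
    (∀ c c₁ c₂ : Cmd, StepVseq c c₁ → StepVseq c c₂ → c₁ ≠ c₂ →
      ∃ c₃, StepVseq c₁ c₃ ∧ StepVseq c₂ c₃) := by
  have comm : ∀ c c₁ c₂ : Cmd, StepLC c c₁ → StepMuC c c₂ →
      c₁ ≠ c₂ ∧ ∃ c₃, StepMuC c₁ c₃ ∧ StepLC c₂ c₃ := by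
    intro c c₁ c₂ h1 h2
    refine ⟨?_, commC h1 h2⟩
    intro he
    have a := muC_stepL h1
    have b := muC_stepMu h2
    rw [he] at a
    omega
  refine ⟨comm, accL, accMu, ?_, ?_, ?_⟩
  · intro c c₁ c₂ h1 h2 hne
    rcases diamondLC h1 h2 with rfl | h3
    · exact absurd rfl hne
    · exact h3
  · intro c c₁ c₂ h1 h2 hne
    rcases diamondMuC h1 h2 with rfl | h3
    · exact absurd rfl hne
    · exact h3
  · intro c c₁ c₂ h1 h2 hne
    rcases h1 with a | a <;> rcases h2 with b | b
    · rcases diamondLC a b with rfl | ⟨c3, x, y⟩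
      · exact absurd rfl hne
      · exact ⟨c3, Or.inl x, Or.inl y⟩
    · obtain ⟨c3, x, y⟩ := commC a b
      exact ⟨c3, Or.inr x, Or.inl y⟩
    · obtain ⟨c3, x, y⟩ := commC b a
      exact ⟨c3, Or.inl y, Or.inr x⟩
    · rcases diamondMuC a b with rfl | ⟨c3, x, y⟩
      · exact absurd rfl hne
      · exact ⟨c3, Or.inr x, Or.inr y⟩
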